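/- arXiv:0808.1185 — 3 statements merged into one kernel-verified Lean document; each statement's English description precedes it below -/
import Mathlib

section
/- (Abstract form of the computation in Example 3.1.) Let n ≥ 3 and m ≥ 1. Suppose u : ℝᵐ → ℝ is a smooth positive function satisfying ‖∇u(x)‖ ≤ 1 and Δu(x) ≥ (n−1)/u(x) for all x. Then for every smooth compactly supported function φ : ℝᵐ → ℝ one has ∫ ‖∇φ‖² ≥ ((n−2)²/4) · ∫ u⁻² φ², i.e. the weighted Poincaré inequality with weight ρ = ((n−2)²/4) u⁻² holds. -/
open MeasureTheory

noncomputable def laplacian {m : ℕ} (u : EuclideanSpace ℝ (Fin m) → ℝ)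
    (x : EuclideanSpace ℝ (Fin m)) : ℝ :=
  ∑ i : Fin m,
    fderiv ℝ (fun y => fderiv ℝ u y (EuclideanSpace.single i (1 : ℝ))) x
      (EuclideanSpace.single i (1 : ℝ))

section aux
variable {m : ℕ}

lemma grad_inner (f : EuclideanSpace ℝ (Fin m) → ℝ) (x w : EuclideanSpace ℝ (Fin m)) :
    (inner ℝ (gradient f x) w : ℝ) = fderiv ℝ f x w :=
  InnerProductSpace.toDual_symm_apply

lemma grad_coord (f : EuclideanSpace ℝ (Fin m) → ℝ) (x : EuclideanSpace ℝ (Fin m)) (i : Fin m) :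
    gradient f x i = fderiv ℝ f x (EuclideanSpace.single i (1 : ℝ)) := by
  have h := grad_inner f x (EuclideanSpace.single i (1 : ℝ))
  simpa only [EuclideanSpace.inner_single_right, one_mul, conj_trivial] using h

lemma inner_grads (f g : EuclideanSpace ℝ (Fin m) → ℝ) (x : EuclideanSpace ℝ (Fin m)) :
    (inner ℝ (gradient f x) (gradient g x) : ℝ)
      = ∑ i, fderiv ℝ f x (EuclideanSpace.single i (1 : ℝ))
          * fderiv ℝ g x (EuclideanSpace.single i (1 : ℝ)) := by
  rw [PiLp.inner_apply]
  simp [grad_coord, mul_comm]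

lemma norm_grad_sq (f : EuclideanSpace ℝ (Fin m) → ℝ) (x : EuclideanSpace ℝ (Fin m)) :
    ‖gradient f x‖ ^ 2 = ∑ i, fderiv ℝ f x (EuclideanSpace.single i (1 : ℝ)) ^ 2 := by
  rw [← real_inner_self_eq_norm_sq, inner_grads]
  simp [sq]

/-- continuity of a directional derivative of a smooth function -/
lemma contDiff_dderiv {f : EuclideanSpace ℝ (Fin m) → ℝ} (hf : ContDiff ℝ (⊤ : ℕ∞) f)
    (w : EuclideanSpace ℝ (Fin m)) :
    ContDiff ℝ (⊤ : ℕ∞) (fun y => fderiv ℝ f y w) :=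
  (hf.fderiv_right (by simp)).clm_apply contDiff_const

end aux

set_option maxHeartbeats 2000000 in
/-- **abstract Example 3.1.** If a smooth positive `u : ℝᵐ → ℝ` satisfies
`‖∇u‖ ≤ 1` and `Δu ≥ (n-1)/u`, then the weighted Poincaré inequality
`∫ ‖∇φ‖² ≥ ((n-2)²/4) ∫ u⁻² φ²` holds for all smooth compactly supported `φ`. -/
theorem weighted_poincare_of_dist_like (n m : ℕ) (hn : 3 ≤ n) (hm : 1 ≤ m)
    (u : EuclideanSpace ℝ (Fin m) → ℝ) (hu : ContDiff ℝ (⊤ : ℕ∞) u)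
    (hupos : ∀ x, 0 < u x) (hugrad : ∀ x, ‖gradient u x‖ ≤ 1)
    (hulap : ∀ x, ((n : ℝ) - 1) / u x ≤ laplacian u x)
    (φ : EuclideanSpace ℝ (Fin m) → ℝ)
    (hφ : ContDiff ℝ (⊤ : ℕ∞) φ) (hφc : HasCompactSupport φ) :
    ((n : ℝ) - 2) ^ 2 / 4 * ∫ x, (u x)⁻¹ ^ 2 * φ x ^ 2 ≤ ∫ x, ‖gradient φ x‖ ^ 2 := by
  classical
  let e : Fin m → EuclideanSpace ℝ (Fin m) := fun i => EuclideanSpace.single i (1 : ℝ)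
  have hne : ∀ x, u x ≠ 0 := fun x => (hupos x).ne'
  have hud : Differentiable ℝ u := hu.differentiable (by simp)
  have hφd : Differentiable ℝ φ := hφ.differentiable (by simp)
  set v : EuclideanSpace ℝ (Fin m) → ℝ := fun y => Real.log (u y) with hv_def
  have hv : ContDiff ℝ (⊤ : ℕ∞) v := hu.log hne
  have hvd : Differentiable ℝ v := hv.differentiable (by simp)
  set c : ℝ := ((n : ℝ) - 2) / 2 with hc_def
  have hc : 0 < c := by
    have : (3 : ℝ) ≤ n := by exact_mod_cast hn
    simp only [hc_def]; linarith
  -- derivative of v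
  have hvderiv : ∀ x, fderiv ℝ v x = (u x)⁻¹ • fderiv ℝ u x := fun x =>
    ((hud x).hasFDerivAt.log (hne x)).fderiv
  -- first derivatives notation
  have hVeq : ∀ i, (fun y => fderiv ℝ v y (e i)) = fun y => (u y)⁻¹ * fderiv ℝ u y (e i) := by
    intro i; funext y; rw [hvderiv y]; rfl
  -- second derivative identity for v
  have hsecond : ∀ (i : Fin m) (x : EuclideanSpace ℝ (Fin m)),
      fderiv ℝ (fun y => fderiv ℝ v y (e i)) x (e i)
        = (u x)⁻¹ * fderiv ℝ (fun y => fderiv ℝ u y (e i)) x (e i)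
          - ((u x)^2)⁻¹ * (fderiv ℝ u x (e i))^2 := by
    intro i x
    have hw : ContDiff ℝ (⊤ : ℕ∞) (fun y => fderiv ℝ u y (e i)) := contDiff_dderiv hu (e i)
    have h1 : HasFDerivAt (fun y => (u y)⁻¹) ((-((u x)^2)⁻¹) • fderiv ℝ u x) x :=
      (hasDerivAt_inv (hne x)).comp_hasFDerivAt x (hud x).hasFDerivAt
    have h2 : HasFDerivAt (fun y => fderiv ℝ u y (e i))
        (fderiv ℝ (fun y => fderiv ℝ u y (e i)) x) x :=
      ((hw.differentiable (by simp)) x).hasFDerivAt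
    have h3 : HasFDerivAt (fun y => (u y)⁻¹ * fderiv ℝ u y (e i)) _ x := h1.mul h2
    rw [hVeq i, h3.fderiv]
    simp [ContinuousLinearMap.smul_apply]
    ring
  -- laplacian identity for v
  have hlapv : ∀ x, laplacian v x
      = laplacian u x / u x - ‖gradient u x‖^2 / (u x)^2 := by
    intro x
    unfold laplacian
    rw [norm_grad_sq]
    rw [Finset.sum_div, Finset.sum_div, ← Finset.sum_sub_distrib]
    refine Finset.sum_congr rfl fun i _ => ?_
    rw [hsecond i x]
    field_simp
    rfl
  -- gradient of v
  have hgradv : ∀ x, gradient v x = (u x)⁻¹ • gradient u x := by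
    intro x
    rw [gradient, gradient, hvderiv x]
    simp
  -- continuity helpers
  have contP : ∀ i : Fin m, Continuous (fun x => fderiv ℝ φ x (e i)) :=
    fun i => (contDiff_dderiv hφ (e i)).continuous
  have contV : ∀ i : Fin m, Continuous (fun x => fderiv ℝ v x (e i)) :=
    fun i => (contDiff_dderiv hv (e i)).continuous
  have contQ : ∀ i : Fin m,
      Continuous (fun x => fderiv ℝ (fun y => fderiv ℝ v y (e i)) x (e i)) :=
    fun i => (contDiff_dderiv (contDiff_dderiv hv (e i)) (e i)).continuous
  have contgradφ : Continuous (gradient φ) :=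
    (LinearIsometryEquiv.continuous _).comp (hφ.continuous_fderiv (by simp))
  have contgradv : Continuous (gradient v) :=
    (LinearIsometryEquiv.continuous _).comp (hv.continuous_fderiv (by simp))
  have contgradu : Continuous (gradient u) :=
    (LinearIsometryEquiv.continuous _).comp (hu.continuous_fderiv (by simp))
  have contlapv : Continuous (laplacian v) := by
    unfold laplacian
    exact continuous_finset_sum _ fun i _ => contQ i
  -- integrability of (compactly supported) * (continuous)
  have key_int : ∀ (f g : EuclideanSpace ℝ (Fin m) → ℝ), Continuous f →
      HasCompactSupport f → Continuous g → Integrable (fun x => f x * g x) := by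
    intro f g hf hfc hg
    exact ((hf.mul hg).integrable_of_hasCompactSupport (hfc.mul_right))
  have hφsqc : HasCompactSupport (fun y => φ y ^ 2) := by
    have := hφc.mul_right (f' := φ)
    have hfe : (fun y => φ y ^ 2) = φ * φ := by funext y; simp [sq]
    rw [hfe]; exact this
  have hφsqcont : Continuous (fun y => φ y ^ 2) := (hφ.continuous).pow 2
  -- derivative of φ²
  have hφsq_fderiv : ∀ x, HasFDerivAt (fun y => φ y ^ 2) ((2 * φ x) • fderiv ℝ φ x) x := by
    intro x
    have h : HasFDerivAt (fun y => φ y * φ y) _ x := (hφd x).hasFDerivAt.mul (hφd x).hasFDerivAt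
    have : (fun y => φ y ^ 2) = fun y => φ y * φ y := by funext y; ring
    rw [this]
    refine h.congr_fderiv ?_
    ext w
    simp
    ring
  have hφsqd : Differentiable ℝ (fun y => φ y ^ 2) :=
    fun x => (hφsq_fderiv x).differentiableAt
  have hderφ2 : ∀ i (x : EuclideanSpace ℝ (Fin m)),
      fderiv ℝ (fun y => φ y ^ 2) x (e i) = 2 * φ x * fderiv ℝ φ x (e i) := by
    intro i x
    rw [(hφsq_fderiv x).fderiv]
    simp [mul_assoc]
  have hderφ2c : ∀ i : Fin m, Continuous (fun x => fderiv ℝ (fun y => φ y ^ 2) x (e i)) :=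
    fun i => contDiff_dderiv (hφ.pow 2) (e i) |>.continuous
  have hderφ2supp : ∀ i : Fin m,
      HasCompactSupport (fun x => fderiv ℝ (fun y => φ y ^ 2) x (e i)) := by
    intro i
    exact (hφsqc.fderiv (𝕜 := ℝ)).comp_left (g := fun L : EuclideanSpace ℝ (Fin m) →L[ℝ] ℝ => L (e i)) rfl
  -- integration by parts in each direction
  have hibp : ∀ i : Fin m,
      ∫ x, φ x ^ 2 * fderiv ℝ (fun y => fderiv ℝ v y (e i)) x (e i)
        = - ∫ x, (2 * φ x * fderiv ℝ φ x (e i)) * fderiv ℝ v x (e i) := by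
    intro i
    have h := integral_mul_fderiv_eq_neg_fderiv_mul_of_integrable
      (μ := (volume : Measure (EuclideanSpace ℝ (Fin m))))
      (f := fun y => φ y ^ 2) (g := fun y => fderiv ℝ v y (e i)) (v := e i)
      (key_int _ _ (hderφ2c i) (hderφ2supp i) (contV i))
      (key_int _ _ hφsqcont hφsqc (contQ i))
      (key_int _ _ hφsqcont hφsqc (contV i))
      (fun x _ => hφsqd x) (fun x _ => (contDiff_dderiv hv (e i)).differentiable (by simp) x)
    rw [h]
    congr 1
    refine integral_congr_ae (Filter.Eventually.of_forall fun x => ?_)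
    dsimp only
    rw [hderφ2 i x]
  -- sum the IBP identities
  have hsum1 : ∫ x, φ x ^ 2 * laplacian v x
      = ∑ i : Fin m, ∫ x, φ x ^ 2 * fderiv ℝ (fun y => fderiv ℝ v y (e i)) x (e i) := by
    rw [← integral_finset_sum _ (fun i _ => key_int _ _ hφsqcont hφsqc (contQ i))]
    refine integral_congr_ae (Filter.Eventually.of_forall fun x => ?_)
    dsimp only
    unfold laplacian
    rw [Finset.mul_sum]
  have hsum2 : ∑ i : Fin m, ∫ x, (2 * φ x * fderiv ℝ φ x (e i)) * fderiv ℝ v x (e i)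
      = ∫ x, 2 * φ x * (inner ℝ (gradient φ x) (gradient v x) : ℝ) := by
    rw [← integral_finset_sum _ (fun i _ => by
      have h0 : Integrable (fun x => φ x * (2 * fderiv ℝ φ x (e i) * fderiv ℝ v x (e i))) :=
        key_int _ _ hφ.continuous hφc
          ((continuous_const.mul (contP i)).mul (contV i))
      exact h0.congr (Filter.Eventually.of_forall fun x => by ring))]
    refine integral_congr_ae (Filter.Eventually.of_forall fun x => ?_)
    dsimp only
    rw [inner_grads, Finset.mul_sum]
    refine Finset.sum_congr rfl fun i _ => by ring
  -- key integration-by-parts identity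
  have hkey : ∫ x, φ x ^ 2 * laplacian v x
      = - ∫ x, 2 * φ x * (inner ℝ (gradient φ x) (gradient v x) : ℝ) := by
    rw [hsum1, Finset.sum_congr rfl (fun i _ => hibp i), Finset.sum_neg_distrib, hsum2]
  -- notation
  set S : EuclideanSpace ℝ (Fin m) → ℝ :=
    fun x => (inner ℝ (gradient φ x) (gradient v x) : ℝ) with hS_def
  have contS : Continuous S := contgradφ.inner contgradv
  have contnv : Continuous (fun x => ‖gradient v x‖ ^ 2) := (contgradv.norm).pow 2
  have continv : Continuous (fun x => (u x)⁻¹) := (hu.continuous).inv₀ hne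
  -- integrability of everything in sight
  have mkint : ∀ (g : EuclideanSpace ℝ (Fin m) → ℝ), Continuous g →
      Integrable (fun x => φ x ^ 2 * g x) :=
    fun g hg => key_int _ _ hφsqcont hφsqc hg
  have mkint1 : ∀ (g : EuclideanSpace ℝ (Fin m) → ℝ), Continuous g →
      Integrable (fun x => φ x * g x) :=
    fun g hg => key_int _ _ hφ.continuous hφc hg
  have intA : Integrable (fun x => c ^ 2 * ((u x)⁻¹ ^ 2 * φ x ^ 2)) :=
    (mkint (fun x => c ^ 2 * (u x)⁻¹ ^ 2) (continuous_const.mul (continv.pow 2))).congr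
      (Filter.Eventually.of_forall fun x => by ring)
  have intB1 : Integrable (fun x => φ x ^ 2 * laplacian v x) := mkint _ contlapv
  have intB2 : Integrable (fun x => φ x ^ 2 * ‖gradient v x‖ ^ 2) := mkint _ contnv
  have intB : Integrable (fun x =>
      c * (φ x ^ 2 * laplacian v x) - c ^ 2 * (φ x ^ 2 * ‖gradient v x‖ ^ 2)) :=
    (intB1.const_mul c).sub (intB2.const_mul (c ^ 2))
  have intC1 : Integrable (fun x => (-c) * (2 * φ x * S x)) :=
    ((mkint1 (fun x => 2 * S x) (continuous_const.mul contS)).congr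
      (Filter.Eventually.of_forall fun x => by ring)).const_mul (-c)
  have intC2 : Integrable (fun x => 2 * φ x * S x) :=
    (mkint1 (fun x => 2 * S x) (continuous_const.mul contS)).congr
      (Filter.Eventually.of_forall fun x => by ring)
  have intC : Integrable (fun x =>
      (-c) * (2 * φ x * S x) - c ^ 2 * (φ x ^ 2 * ‖gradient v x‖ ^ 2)) :=
    intC1.sub (intB2.const_mul (c ^ 2))
  have intD : Integrable (fun x => ‖gradient φ x‖ ^ 2) := by
    have hD : HasCompactSupport (fun x => ‖gradient φ x‖ ^ 2) :=
      (hφc.fderiv (𝕜 := ℝ)).comp_left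
        (g := fun L : EuclideanSpace ℝ (Fin m) →L[ℝ] ℝ =>
          ‖(InnerProductSpace.toDual ℝ (EuclideanSpace ℝ (Fin m))).symm L‖ ^ 2) (by simp)
    exact ((contgradφ.norm).pow 2).integrable_of_hasCompactSupport hD
  -- pointwise inequality 1
  have pt1 : ∀ x, c ^ 2 * ((u x)⁻¹ ^ 2 * φ x ^ 2)
      ≤ c * (φ x ^ 2 * laplacian v x) - c ^ 2 * (φ x ^ 2 * ‖gradient v x‖ ^ 2) := by
    intro x
    have hU := hupos x
    have hnv : ‖gradient v x‖ ^ 2 = ‖gradient u x‖ ^ 2 / (u x) ^ 2 := by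
      rw [hgradv x, norm_smul, mul_pow, Real.norm_eq_abs, sq_abs]
      field_simp
    rw [hlapv x, hnv, ← sub_nonneg]
    have hexp : c * (φ x ^ 2 * (laplacian u x / u x - ‖gradient u x‖ ^ 2 / u x ^ 2))
          - c ^ 2 * (φ x ^ 2 * (‖gradient u x‖ ^ 2 / u x ^ 2))
          - c ^ 2 * ((u x)⁻¹ ^ 2 * φ x ^ 2)
        = φ x ^ 2 * (c * (laplacian u x * u x) - (c + c ^ 2) * ‖gradient u x‖ ^ 2 - c ^ 2)
            / (u x) ^ 2 := by
      field_simp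
      ring
    rw [hexp]
    apply div_nonneg _ (sq_nonneg _)
    apply mul_nonneg (sq_nonneg _)
    have hLU : (n : ℝ) - 1 ≤ laplacian u x * u x := (div_le_iff₀ hU).1 (hulap x)
    have hn1 : (n : ℝ) - 1 = 2 * c + 1 := by rw [hc_def]; ring
    have hG1 : ‖gradient u x‖ ^ 2 ≤ 1 := by
      nlinarith [hugrad x, norm_nonneg (gradient u x)]
    nlinarith [mul_le_mul_of_nonneg_left hLU hc.le, hG1, hc,
      mul_nonneg (add_nonneg hc.le (sq_nonneg c)) (sq_nonneg ‖gradient u x‖)]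
  -- pointwise inequality 2
  have pt2 : ∀ x, (-c) * (2 * φ x * S x) - c ^ 2 * (φ x ^ 2 * ‖gradient v x‖ ^ 2)
      ≤ ‖gradient φ x‖ ^ 2 := by
    intro x
    have h := norm_add_sq_real (gradient φ x) ((c * φ x) • gradient v x)
    have h2 : (inner ℝ (gradient φ x) ((c * φ x) • gradient v x) : ℝ) = (c * φ x) * S x :=
      real_inner_smul_right _ _ _
    have h3 : ‖(c * φ x) • gradient v x‖ ^ 2 = (c * φ x) ^ 2 * ‖gradient v x‖ ^ 2 := by
      rw [norm_smul, mul_pow, Real.norm_eq_abs, sq_abs]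
    nlinarith [sq_nonneg ‖gradient φ x + (c * φ x) • gradient v x‖, h, h2, h3]
  -- put everything together
  have hIB : ∫ x, (c * (φ x ^ 2 * laplacian v x) - c ^ 2 * (φ x ^ 2 * ‖gradient v x‖ ^ 2))
      = c * (∫ x, φ x ^ 2 * laplacian v x)
        - c ^ 2 * ∫ x, φ x ^ 2 * ‖gradient v x‖ ^ 2 := by
    rw [integral_sub (intB1.const_mul c) (intB2.const_mul (c ^ 2)),
      integral_const_mul, integral_const_mul]
  have hIC : ∫ x, ((-c) * (2 * φ x * S x) - c ^ 2 * (φ x ^ 2 * ‖gradient v x‖ ^ 2))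
      = (-c) * (∫ x, 2 * φ x * S x)
        - c ^ 2 * ∫ x, φ x ^ 2 * ‖gradient v x‖ ^ 2 := by
    rw [integral_sub intC1 (intB2.const_mul (c ^ 2)),
      integral_const_mul, integral_const_mul]
  have hBC : ∫ x, (c * (φ x ^ 2 * laplacian v x) - c ^ 2 * (φ x ^ 2 * ‖gradient v x‖ ^ 2))
      = ∫ x, ((-c) * (2 * φ x * S x) - c ^ 2 * (φ x ^ 2 * ‖gradient v x‖ ^ 2)) := by
    rw [hIB, hIC, hkey]
    ring
  have hLHSeq : ((n : ℝ) - 2) ^ 2 / 4 * ∫ x, (u x)⁻¹ ^ 2 * φ x ^ 2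
      = ∫ x, c ^ 2 * ((u x)⁻¹ ^ 2 * φ x ^ 2) := by
    rw [integral_const_mul]
    congr 1
    rw [hc_def]
    ring
  calc ((n : ℝ) - 2) ^ 2 / 4 * ∫ x, (u x)⁻¹ ^ 2 * φ x ^ 2
      = ∫ x, c ^ 2 * ((u x)⁻¹ ^ 2 * φ x ^ 2) := hLHSeq
    _ ≤ ∫ x, (c * (φ x ^ 2 * laplacian v x) - c ^ 2 * (φ x ^ 2 * ‖gradient v x‖ ^ 2)) :=
        integral_mono intA intB pt1
    _ = ∫ x, ((-c) * (2 * φ x * S x) - c ^ 2 * (φ x ^ 2 * ‖gradient v x‖ ^ 2)) := hBC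
    _ ≤ ∫ x, ‖gradient φ x‖ ^ 2 := integral_mono intC intD pt2
end

section
/- (Inequality (2.3) of the paper, the power-of-gradient Bochner step.) Let n ≥ 3, m ≥ 1, and set α = (n−2)/(n−1). Let u : ℝᵐ → ℝ be a C² function with u(x) > 0 for all x, let τ : ℝᵐ → ℝ, and suppose that at every point x, Δu(x) ≥ −(n−1)τ(x)u(x) + (1/(n−1))·‖∇u(x)‖²/u(x). Then the function g = u^α satisfies Δg(x) ≥ −(n−2)τ(x)g(x) at every point x. -/
/-- The squared norm of the gradient is the sum of squared directional derivatives. -/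
theorem grad_norm_sq_eq {m : ℕ} (u : EuclideanSpace ℝ (Fin m) → ℝ)
    (x : EuclideanSpace ℝ (Fin m)) :
    ‖gradient u x‖^2 = ∑ i : Fin m, (fderiv ℝ u x (EuclideanSpace.single i (1:ℝ)))^2 := by
  have h : ∀ i : Fin m, fderiv ℝ u x (EuclideanSpace.single i (1:ℝ)) = gradient u x i := by
    intro i
    have : fderiv ℝ u x (EuclideanSpace.single i (1:ℝ))
        = (inner ℝ (gradient u x) (EuclideanSpace.single i (1:ℝ)) : ℝ) := by
      simp [gradient]
    rw [this, EuclideanSpace.inner_single_right]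
    simp
  simp_rw [h]
  rw [← Real.sqrt_sq (norm_nonneg (gradient u x))]
  rw [EuclideanSpace.norm_eq]
  rw [Real.sq_sqrt (by positivity), Real.sq_sqrt (by positivity)]
  simp [sq_abs]

/-- **inequality (2.3).** If a positive `C²` function `u : ℝᵐ → ℝ` satisfies
the improved Bochner-type inequality `Δu ≥ -(n-1) τ u + (1/(n-1)) ‖∇u‖²/u`, then
`g = u^((n-2)/(n-1))` satisfies `Δg ≥ -(n-2) τ g`. -/
theorem laplacian_rpow_ge (n m : ℕ) (hn : 3 ≤ n) (hm : 1 ≤ m)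
    (u : EuclideanSpace ℝ (Fin m) → ℝ) (hu : ContDiff ℝ 2 u) (hupos : ∀ x, 0 < u x)
    (τ : EuclideanSpace ℝ (Fin m) → ℝ)
    (hbochner : ∀ x, -((n : ℝ) - 1) * τ x * u x +
      (1 / ((n : ℝ) - 1)) * ‖gradient u x‖ ^ 2 / u x ≤ laplacian u x) :
    ∀ x, -((n : ℝ) - 2) * τ x * (u x ^ (((n : ℝ) - 2) / ((n : ℝ) - 1))) ≤
      laplacian (fun y => u y ^ (((n : ℝ) - 2) / ((n : ℝ) - 1))) x := by
  intro x
  set α : ℝ := ((n : ℝ) - 2) / ((n : ℝ) - 1) with hαdef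
  have hn3 : (3 : ℝ) ≤ (n : ℝ) := by exact_mod_cast hn
  have hn1 : (0 : ℝ) < (n : ℝ) - 1 := by linarith
  have hn2 : (0 : ℝ) < (n : ℝ) - 2 := by linarith
  have hαpos : 0 < α := div_pos hn2 hn1
  have hudiff : Differentiable ℝ u := hu.differentiable two_ne_zero
  have hfd : ∀ y, HasFDerivAt u (fderiv ℝ u y) y := fun y => (hudiff y).hasFDerivAt
  have hune : ∀ y, u y ≠ 0 := fun y => (hupos y).ne'
  -- derivative of g = u^α
  have hg' : ∀ y, HasFDerivAt (fun z => u z ^ α)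
      ((α * u y ^ (α - 1)) • fderiv ℝ u y) y :=
    fun y => (hfd y).rpow_const (Or.inl (hune y))
  have hgfderiv : ∀ y, fderiv ℝ (fun z => u z ^ α) y = (α * u y ^ (α - 1)) • fderiv ℝ u y :=
    fun y => (hg' y).fderiv
  set U := u x with hU
  have hUpos : 0 < U := hupos x
  -- Key per-coordinate computation
  have key : ∀ i : Fin m,
      fderiv ℝ (fun y => fderiv ℝ (fun z => u z ^ α) y (EuclideanSpace.single i (1 : ℝ))) x
        (EuclideanSpace.single i (1 : ℝ))
      = α * (α - 1) * U ^ (α - 1 - 1) * (fderiv ℝ u x (EuclideanSpace.single i (1:ℝ)))^2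
        + α * U ^ (α - 1) *
          fderiv ℝ (fun y => fderiv ℝ u y (EuclideanSpace.single i (1:ℝ))) x
            (EuclideanSpace.single i (1:ℝ)) := by
    intro i
    set v := EuclideanSpace.single i (1 : ℝ) with hv
    have hfun : (fun y => fderiv ℝ (fun z => u z ^ α) y v)
        = fun y => (α * u y ^ (α - 1)) * fderiv ℝ u y v := by
      funext y; rw [hgfderiv y]; rfl
    rw [hfun]
    -- B : second argument
    have hB1 : ContDiff ℝ 1 (fun y => fderiv ℝ u y v) :=
      (hu.fderiv_right (by norm_num)).clm_apply contDiff_const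
    have hBd : DifferentiableAt ℝ (fun y => fderiv ℝ u y v) x :=
      (hB1.differentiable one_ne_zero).differentiableAt
    have hB : HasFDerivAt (fun y => fderiv ℝ u y v)
        (fderiv ℝ (fun y => fderiv ℝ u y v) x) x := hBd.hasFDerivAt
    -- A : first factor
    have hA : HasFDerivAt (fun y => α * u y ^ (α - 1))
        (α • (((α - 1) * U ^ (α - 1 - 1)) • fderiv ℝ u x)) x :=
      ((hfd x).rpow_const (Or.inl (hune x))).const_mul α
    have hprod := hA.fun_mul hB
    rw [hprod.fderiv]
    simp only [ContinuousLinearMap.add_apply, ContinuousLinearMap.smul_apply,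
      ContinuousLinearMap.coe_smul', Pi.smul_apply, smul_eq_mul]
    ring
  -- assemble the laplacian of g
  have hΔg : laplacian (fun y => u y ^ α) x
      = α * (α - 1) * U ^ (α - 1 - 1) * ‖gradient u x‖^2
        + α * U ^ (α - 1) * laplacian u x := by
    unfold laplacian
    rw [Finset.sum_congr rfl (fun i _ => key i), Finset.sum_add_distrib,
      ← Finset.mul_sum, ← Finset.mul_sum, grad_norm_sq_eq]
  rw [hΔg]
  set G := ‖gradient u x‖^2 with hG
  have hGnn : 0 ≤ G := sq_nonneg _
  have hcoef : 0 < α * U ^ (α - 1) := by positivity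
  have h1 : α * U ^ (α - 1) * (-((n : ℝ) - 1) * τ x * U + (1 / ((n : ℝ) - 1)) * G / U)
      ≤ α * U ^ (α - 1) * laplacian u x :=
    mul_le_mul_of_nonneg_left (hbochner x) hcoef.le
  -- the exact identity for the lower bound
  have e1 : U ^ (α - 1) * U = U ^ α := by
    have h := Real.rpow_add hUpos (α - 1) 1
    rw [Real.rpow_one] at h
    have hh : α - 1 + 1 = α := by ring
    rw [hh] at h
    exact h.symm
  have e2 : U ^ (α - 1) / U = U ^ (α - 1 - 1) := by
    have h := Real.rpow_sub hUpos (α - 1) 1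
    rw [Real.rpow_one] at h
    exact h.symm
  have e3 : α * ((n : ℝ) - 1) = (n : ℝ) - 2 := by
    rw [hαdef]; field_simp
  have e4 : α - 1 = -(1 / ((n : ℝ) - 1)) := by
    rw [hαdef]; field_simp; ring
  have hid : α * (α - 1) * U ^ (α - 1 - 1) * G
      + α * U ^ (α - 1) * (-((n : ℝ) - 1) * τ x * U + (1 / ((n : ℝ) - 1)) * G / U)
      = -((n : ℝ) - 2) * τ x * U ^ α := by
    have expand : α * U ^ (α - 1) * (-((n : ℝ) - 1) * τ x * U + (1 / ((n : ℝ) - 1)) * G / U)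
        = -(α * ((n : ℝ) - 1)) * τ x * (U ^ (α - 1) * U)
          + α * (1 / ((n : ℝ) - 1)) * G * (U ^ (α - 1) / U) := by
      ring
    rw [expand, e1, e2, e3]
    have : α * (α - 1) * U ^ (α - 1 - 1) * G = -(α * (1 / ((n : ℝ) - 1))) * U ^ (α - 1 - 1) * G := by
      rw [e4]; ring
    rw [this]; ring
  calc -((n : ℝ) - 2) * τ x * U ^ α
      = α * (α - 1) * U ^ (α - 1 - 1) * G
        + α * U ^ (α - 1) * (-((n : ℝ) - 1) * τ x * U + (1 / ((n : ℝ) - 1)) * G / U) := hid.symm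
    _ ≤ α * (α - 1) * U ^ (α - 1 - 1) * G + α * U ^ (α - 1) * laplacian u x := by linarith
end

section
/- (Inequality (2.4) of the paper.) Let n ≥ 3 and m ≥ 1. Let τ : ℝᵐ → ℝ be continuous and suppose the weighted Poincaré inequality ∫ ‖∇ψ‖² ≥ (n−2) ∫ τ ψ² holds for every smooth compactly supported ψ : ℝᵐ → ℝ. Then for every smooth function g : ℝᵐ → ℝ and every smooth compactly supported function φ : ℝᵐ → ℝ, ∫ φ² g (Δg + (n−2) τ g) ≤ ∫ ‖∇φ‖² g². -/
open MeasureTheory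

namespace TestFnAux

variable {m : ℕ}

/-- directional derivative along the `i`-th coordinate -/
noncomputable def D (f : EuclideanSpace ℝ (Fin m) → ℝ) (i : Fin m)
    (x : EuclideanSpace ℝ (Fin m)) : ℝ :=
  fderiv ℝ f x (EuclideanSpace.single i (1 : ℝ))

lemma contDiff_D {f : EuclideanSpace ℝ (Fin m) → ℝ} (hf : ContDiff ℝ (⊤ : ℕ∞) f) (i : Fin m) :
    ContDiff ℝ (⊤ : ℕ∞) (D f i) :=
  (hf.fderiv_right (by simp)).clm_apply contDiff_const

lemma hcs_D {f : EuclideanSpace ℝ (Fin m) → ℝ} (hf : HasCompactSupport f) (i : Fin m) :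
    HasCompactSupport (D f i) :=
  hf.fderiv_apply ℝ _

lemma D_mul {f g : EuclideanSpace ℝ (Fin m) → ℝ} (hf : ContDiff ℝ (⊤ : ℕ∞) f)
    (hg : ContDiff ℝ (⊤ : ℕ∞) g) (i : Fin m) (x : EuclideanSpace ℝ (Fin m)) :
    D (fun y => f y * g y) i x = f x * D g i x + g x * D f i x := by
  unfold D
  rw [fderiv_fun_mul (hf.differentiable (by simp) x) (hg.differentiable (by simp) x)]
  simp [smul_eq_mul]

lemma grad_sq (f : EuclideanSpace ℝ (Fin m) → ℝ) (x : EuclideanSpace ℝ (Fin m)) :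
    ‖gradient f x‖ ^ 2 = ∑ i : Fin m, (D f i x) ^ 2 := by
  have hco : ∀ i, gradient f x i = D f i x := by
    intro i
    have h1 : (inner ℝ (gradient f x) (EuclideanSpace.single i (1 : ℝ)) : ℝ)
        = fderiv ℝ f x (EuclideanSpace.single i (1 : ℝ)) := by
      rw [gradient, InnerProductSpace.toDual_symm_apply]
    rw [EuclideanSpace.inner_single_right] at h1
    simpa [D] using h1
  rw [EuclideanSpace.norm_eq, Real.sq_sqrt (by positivity)]
  refine Finset.sum_congr rfl fun i _ => ?_
  rw [Real.norm_eq_abs, sq_abs, hco i]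

end TestFnAux

/-- **inequality (2.4).** If the weighted Poincaré inequality
`∫ ‖∇ψ‖² ≥ (n-2) ∫ τ ψ²` holds for all smooth compactly supported `ψ`, then for every
smooth `g` and smooth compactly supported `φ`,
`∫ φ² g (Δg + (n-2) τ g) ≤ ∫ ‖∇φ‖² g²`. -/
theorem test_fn_inequality (n m : ℕ) (hn : 3 ≤ n) (hm : 1 ≤ m)
    (τ : EuclideanSpace ℝ (Fin m) → ℝ) (hτ : Continuous τ)
    (hpoincare : ∀ ψ : EuclideanSpace ℝ (Fin m) → ℝ, ContDiff ℝ (⊤ : ℕ∞) ψ →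
      HasCompactSupport ψ →
      ((n : ℝ) - 2) * ∫ x, τ x * ψ x ^ 2 ≤ ∫ x, ‖gradient ψ x‖ ^ 2)
    (g φ : EuclideanSpace ℝ (Fin m) → ℝ) (hg : ContDiff ℝ (⊤ : ℕ∞) g)
    (hφ : ContDiff ℝ (⊤ : ℕ∞) φ) (hφc : HasCompactSupport φ) :
    ∫ x, φ x ^ 2 * g x * (laplacian g x + ((n : ℝ) - 2) * τ x * g x) ≤
      ∫ x, ‖gradient φ x‖ ^ 2 * g x ^ 2 := by
  classical
  open TestFnAux in
  have hE : (1:ℕ) = 1 := rfl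
  let E := EuclideanSpace ℝ (Fin m)
  -- the product ψ = φ * g and the weight v = φ² * g
  set ψ : E → ℝ := fun y => φ y * g y with hψdef
  set v : E → ℝ := fun y => φ y * ψ y with hvdef
  have hψ : ContDiff ℝ (⊤ : ℕ∞) ψ := by rw [hψdef]; exact hφ.mul hg
  have hψc : HasCompactSupport ψ := by rw [hψdef]; exact hφc.mul_right
  have hv : ContDiff ℝ (⊤ : ℕ∞) v := by rw [hvdef]; exact hφ.mul hψ
  have hvc : HasCompactSupport v := by rw [hvdef]; exact hφc.mul_right
  -- integrability helper
  have integ : ∀ f : E → ℝ, Continuous f → HasCompactSupport f → Integrable f :=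
    fun f hf hc => hf.integrable_of_hasCompactSupport hc
  have hgc : Continuous g := hg.continuous
  have hφcont : Continuous φ := hφ.continuous
  have hDg : ∀ i, ContDiff ℝ (⊤ : ℕ∞) (D g i) := fun i => contDiff_D hg i
  have hDv : ∀ i, Continuous (D v i) := fun i => (contDiff_D hv i).continuous
  have hDDg : ∀ i, Continuous (fun x => D (D g i) i x) :=
    fun i => (contDiff_D (hDg i) i).continuous
  -- integration by parts for each direction
  have ibp : ∀ i : Fin m, ∫ x, v x * D (D g i) i x = - ∫ x, D v i x * D g i x := by
    intro i
    apply integral_mul_fderiv_eq_neg_fderiv_mul_of_integrable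
    · exact integ _ ((hDv i).mul (hDg i).continuous) ((hcs_D hvc i).mul_right)
    · exact integ _ (hv.continuous.mul (hDDg i)) hvc.mul_right
    · exact integ _ (hv.continuous.mul (hDg i).continuous) hvc.mul_right
    · exact fun x _ => hv.differentiable (by simp) x
    · exact fun x _ => (hDg i).differentiable (by simp) x
  -- pointwise identity : D v i * D g i = (D ψ i)² - (D φ i)² * g²
  have pointwise : ∀ i x, D v i x * D g i x = (D ψ i x) ^ 2 - (D φ i x) ^ 2 * g x ^ 2 := by
    intro i x
    have h1 : D ψ i x = φ x * D g i x + g x * D φ i x := D_mul hφ hg i x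
    have h2 : D v i x = φ x * D ψ i x + ψ x * D φ i x := D_mul hφ hψ i x
    rw [h2, h1, hψdef]
    ring
  -- step A : ∫ v * Δg = ∫ ‖∇φ‖² g² - ∫ ‖∇ψ‖²
  have hsq : ∀ (f : EuclideanSpace ℝ (Fin m) → ℝ), HasCompactSupport f →
      HasCompactSupport (fun x => f x ^ 2) := by
    intro f hf
    simpa [Function.comp_def] using hf.comp_left (g := fun t : ℝ => t ^ 2) (by simp)
  have intψ : ∀ i, Integrable (fun x => (D ψ i x) ^ 2) := fun i =>
    integ _ ((contDiff_D hψ i).continuous.pow 2) (hsq _ (hcs_D hψc i))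
  have intφg : ∀ i, Integrable (fun x => (D φ i x) ^ 2 * g x ^ 2) := fun i =>
    integ _ (((contDiff_D hφ i).continuous.pow 2).mul (hgc.pow 2))
      ((hsq _ (hcs_D hφc i)).mul_right)
  have stepA : ∫ x, v x * laplacian g x
      = (∫ x, ‖gradient φ x‖ ^ 2 * g x ^ 2) - ∫ x, ‖gradient ψ x‖ ^ 2 := by
    have e1 : ∫ x, v x * laplacian g x = ∑ i : Fin m, ∫ x, v x * D (D g i) i x := by
      rw [← integral_finset_sum]
      · apply integral_congr_ae
        filter_upwards with x
        simp only [laplacian, Finset.mul_sum]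
        rfl
      · intro i _
        exact integ _ (hv.continuous.mul (hDDg i)) hvc.mul_right
    have e2 : ∑ i : Fin m, ∫ x, v x * D (D g i) i x
        = - ∑ i : Fin m, ∫ x, ((D ψ i x) ^ 2 - (D φ i x) ^ 2 * g x ^ 2) := by
      rw [← Finset.sum_neg_distrib]
      refine Finset.sum_congr rfl fun i _ => ?_
      rw [ibp i, neg_inj]
      apply integral_congr_ae
      filter_upwards with x using pointwise i x
    have e3 : ∑ i : Fin m, ∫ x, ((D ψ i x) ^ 2 - (D φ i x) ^ 2 * g x ^ 2)
        = (∫ x, ‖gradient ψ x‖ ^ 2) - ∫ x, ‖gradient φ x‖ ^ 2 * g x ^ 2 := by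
      have : ∀ i : Fin m, ∫ x, ((D ψ i x) ^ 2 - (D φ i x) ^ 2 * g x ^ 2)
          = (∫ x, (D ψ i x) ^ 2) - ∫ x, (D φ i x) ^ 2 * g x ^ 2 := fun i =>
        integral_sub (intψ i) (intφg i)
      rw [Finset.sum_congr rfl fun i _ => this i, Finset.sum_sub_distrib]
      congr 1
      · rw [← integral_finset_sum _ (fun i _ => intψ i)]
        apply integral_congr_ae
        filter_upwards with x using (grad_sq ψ x).symm
      · rw [← integral_finset_sum _ (fun i _ => intφg i)]
        apply integral_congr_ae
        filter_upwards with x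
        rw [grad_sq φ x, Finset.sum_mul]
    rw [e1, e2, e3]
    ring
  -- Poincaré applied to ψ
  have poin : ((n : ℝ) - 2) * ∫ x, τ x * ψ x ^ 2 ≤ ∫ x, ‖gradient ψ x‖ ^ 2 :=
    hpoincare ψ hψ hψc
  -- split the left-hand side
  have intΔ : Integrable (fun x => v x * laplacian g x) := by
    refine integ _ (hv.continuous.mul ?_) hvc.mul_right
    exact continuous_finset_sum _ fun i _ => hDDg i
  have intτ : Integrable (fun x => τ x * ψ x ^ 2) :=
    integ _ (hτ.mul (hψ.continuous.pow 2)) ((hsq _ hψc).mul_left)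
  have lhs_eq : ∫ x, φ x ^ 2 * g x * (laplacian g x + ((n : ℝ) - 2) * τ x * g x)
      = (∫ x, v x * laplacian g x) + ((n : ℝ) - 2) * ∫ x, τ x * ψ x ^ 2 := by
    rw [← integral_const_mul, ← integral_add intΔ (intτ.const_mul (((n : ℝ) - 2)))]
    apply integral_congr_ae
    filter_upwards with x
    simp only [hvdef, hψdef]
    ring
  rw [lhs_eq, stepA]
  linarith [poin]
end
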